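/- arXiv:0902.0760 — 5 statements merged into one kernel-verified Lean document; each statement's English description precedes it below -/
import Mathlib

section
/- Let j₁, j₂ ∈ ℂ[z] be coprime polynomials with N := deg j₁ > deg j₂ =: M and N ≥ 1, and suppose that j = j₁/j₂ is unramified outside {0,1,∞}, i.e. every complex root of j₁′j₂ − j₁j₂′ is a root of j₁·j₂·(j₁ − j₂). Then the number of distinct complex roots of the polynomial j₁·j₂·(j₁ − j₂) equals N + 1. -/
/-!
Let `F = j₁ j₂ (j₁ - j₂)` and `W = j₁' j₂ - j₁ j₂'`, the Wronskian of `j₂` and `j₁`. Coprimality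
makes the three factors of `F` pairwise coprime, so at a root `z` of `F` exactly one factor `f`
vanishes, and `W` is, up to sign, also the Wronskian of `f` with a factor not vanishing at `z`.
Hence `W` vanishes at `z` to order exactly `ord_z F - 1`. As `W` has no roots besides those of `F`,
summing over the distinct roots of `F` gives `deg W = deg F - #roots(F)`, and
`deg W = N + M - 1`, `deg F = 2N + M` leave `#roots(F) = N + 1`.
-/

open Polynomial

namespace Polynomial

section Semiring

variable {R : Type*} [Semiring R]

theorem coeff_derivative_mul_natDegree_add_natDegree_sub_one (p q : R[X]) :
    (derivative p * q).coeff (p.natDegree + q.natDegree - 1) =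
      p.leadingCoeff * p.natDegree * q.leadingCoeff := by
  rcases Nat.eq_zero_or_pos p.natDegree with hp | hp
  · simp [derivative_of_natDegree_zero hp, hp]
  · rw [show p.natDegree + q.natDegree - 1 = (p.natDegree - 1) + q.natDegree by omega,
      coeff_mul_add_eq_of_natDegree_le (natDegree_derivative_le p) le_rfl, coeff_derivative,
      ← Nat.cast_add_one, Nat.sub_add_cancel hp, leadingCoeff, leadingCoeff]

end Semiring

section CommRing

variable {R : Type*} [CommRing R]

theorem rootMultiplicity_neg [IsDomain R] (p : R[X]) (z : R) :
    rootMultiplicity z (-p) = rootMultiplicity z p := by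
  classical
  rw [← count_roots, ← count_roots, roots_neg]

theorem rootMultiplicity_sub_of_pow_dvd {f g : R[X]} {z : R} (hf : f ≠ 0)
    (hg : (X - C z) ^ (rootMultiplicity z f + 1) ∣ g) :
    rootMultiplicity z (g - f) = rootMultiplicity z f := by
  have hndvd : ¬ (X - C z) ^ (rootMultiplicity z f + 1) ∣ g - f := fun h =>
    pow_rootMultiplicity_not_dvd hf z (by simpa using dvd_sub hg h)
  have hgf : g - f ≠ 0 := fun h => hndvd (h ▸ dvd_zero _)
  refine le_antisymm ((rootMultiplicity_le_iff hgf z _).2 hndvd) ?_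
  exact (le_rootMultiplicity_iff hgf).2 <|
    dvd_sub ((pow_dvd_pow _ (Nat.le_succ _)).trans hg) (pow_rootMultiplicity_dvd f z)

variable [IsDomain R] [CharZero R]

theorem natDegree_wronskian {p q : R[X]} (hp : p ≠ 0) (hq : q ≠ 0)
    (hpq : p.natDegree ≠ q.natDegree) :
    (wronskian p q).natDegree = p.natDegree + q.natDegree - 1 := by
  have hcoeff : (wronskian p q).coeff (p.natDegree + q.natDegree - 1) =
      p.leadingCoeff * q.leadingCoeff * ((q.natDegree : R) - p.natDegree) := by
    rw [wronskian, coeff_sub, mul_comm p, add_comm p.natDegree,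
      coeff_derivative_mul_natDegree_add_natDegree_sub_one,
      add_comm q.natDegree, coeff_derivative_mul_natDegree_add_natDegree_sub_one]
    ring
  have hne : (wronskian p q).coeff (p.natDegree + q.natDegree - 1) ≠ 0 := by
    rw [hcoeff]
    refine mul_ne_zero (mul_ne_zero (leadingCoeff_ne_zero.2 hp) (leadingCoeff_ne_zero.2 hq)) ?_
    exact sub_ne_zero.2 (Nat.cast_injective.ne hpq.symm)
  refine le_antisymm ?_ (le_natDegree_of_ne_zero hne)
  have hW : wronskian p q ≠ 0 := fun h => hne (by rw [h, coeff_zero])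
  exact Nat.le_sub_one_of_lt (natDegree_wronskian_lt_add hW)

theorem rootMultiplicity_wronskian_add_one {p q : R[X]} {z : R} (hp : p ≠ 0)
    (hpz : p.IsRoot z) (hqz : ¬ q.IsRoot z) :
    rootMultiplicity z (wronskian p q) + 1 = rootMultiplicity z p := by
  have hq : q ≠ 0 := by rintro rfl; exact hqz (by simp)
  have hp' : derivative p ≠ 0 := fun h => hp <| by
    obtain ⟨c, rfl⟩ := natDegree_eq_zero.1 (derivative_eq_zero.1 h)
    simpa using hpz
  have hord : rootMultiplicity z (derivative p * q) + 1 = rootMultiplicity z p := by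
    rw [rootMultiplicity_mul (mul_ne_zero hp' hq), derivative_rootMultiplicity_of_root hpz,
      rootMultiplicity_eq_zero hqz, add_zero,
      Nat.sub_add_cancel ((rootMultiplicity_pos hp).2 hpz)]
  rw [wronskian, rootMultiplicity_sub_of_pow_dvd (mul_ne_zero hp' hq)
    (hord ▸ dvd_mul_of_dvd_left (pow_rootMultiplicity_dvd p z) _), hord]

theorem rootMultiplicity_wronskian_add_one_of_isRoot_right {p q : R[X]} {z : R} (hq : q ≠ 0)
    (hpz : ¬ p.IsRoot z) (hqz : q.IsRoot z) :
    rootMultiplicity z (wronskian p q) + 1 = rootMultiplicity z q := by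
  rw [← wronskian_neg_eq, rootMultiplicity_neg, rootMultiplicity_wronskian_add_one hq hqz hpz]

theorem _root_.IsCoprime.rootMultiplicity_wronskian_add_one {p q : R[X]} (h : IsCoprime p q)
    (hF : p * q * (p - q) ≠ 0) {z : R} (hz : (p * q * (p - q)).IsRoot z) :
    rootMultiplicity z (wronskian p q) + 1 = rootMultiplicity z (p * q * (p - q)) := by
  obtain ⟨hpq, hsub⟩ := mul_ne_zero_iff.1 hF
  obtain ⟨hp, hq⟩ := mul_ne_zero_iff.1 hpq
  have hcop : p.eval z ≠ 0 ∨ q.eval z ≠ 0 := by simpa using aeval_ne_zero_of_isCoprime h z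
  rw [rootMultiplicity_mul hF, rootMultiplicity_mul hpq]
  simp only [IsRoot.def, eval_mul, eval_sub, mul_eq_zero, sub_eq_zero] at hz
  rcases hz with (hpz | hqz) | hpqz
  · have hqz : ¬ q.IsRoot z := hcop.resolve_left (not_not.2 hpz)
    have hsubz : ¬ (p - q).IsRoot z := by simpa [hpz] using hqz
    rw [rootMultiplicity_eq_zero hqz, rootMultiplicity_eq_zero hsubz,
      Polynomial.rootMultiplicity_wronskian_add_one hp hpz hqz, add_zero, add_zero]
  · have hpz : ¬ p.IsRoot z := hcop.resolve_right (not_not.2 hqz)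
    have hsubz : ¬ (p - q).IsRoot z := by simpa [hqz] using hpz
    rw [rootMultiplicity_eq_zero hpz, rootMultiplicity_eq_zero hsubz,
      rootMultiplicity_wronskian_add_one_of_isRoot_right hq hpz hqz, zero_add, add_zero]
  · have hpz : ¬ p.IsRoot z := fun hpz => hcop.elim (· hpz) (· (hpqz ▸ hpz))
    have hqz : ¬ q.IsRoot z := fun hqz => hpz (hpqz.trans hqz)
    have hsubz : (p - q).IsRoot z := by simp [hpqz]
    rw [rootMultiplicity_eq_zero hpz, rootMultiplicity_eq_zero hqz,
      show wronskian p q = wronskian (p - q) q by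
        rw [sub_eq_add_neg, wronskian_add_left, wronskian_neg_left, wronskian_self_eq_zero,
          neg_zero, add_zero],
      Polynomial.rootMultiplicity_wronskian_add_one hsub hsubz hqz, zero_add, zero_add]

end CommRing

theorem sum_rootMultiplicity_eq_natDegree {k : Type*} [Field k] [IsAlgClosed k] {p : k[X]}
    {s : Finset k} (hs : ∀ z ∈ p.roots, z ∈ s) :
    ∑ z ∈ s, rootMultiplicity z p = p.natDegree := by
  classical
  simp_rw [← count_roots]
  rw [Multiset.sum_count_eq_card hs, IsAlgClosed.card_roots_eq_natDegree]

theorem _root_.IsCoprime.card_roots_toFinset_add_natDegree_wronskian {k : Type*} [Field k]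
    [IsAlgClosed k] [CharZero k] [DecidableEq k] {p q : k[X]} (h : IsCoprime p q)
    (hF : p * q * (p - q) ≠ 0)
    (hW : ∀ z, (wronskian p q).IsRoot z → (p * q * (p - q)).IsRoot z) :
    (p * q * (p - q)).roots.toFinset.card + (wronskian p q).natDegree =
      (p * q * (p - q)).natDegree := by
  set F := p * q * (p - q)
  have hWF : ∀ z ∈ (wronskian p q).roots, z ∈ F.roots.toFinset := fun z hz => by
    rw [Multiset.mem_toFinset, mem_roots hF]
    exact hW z (isRoot_of_mem_roots hz)
  calc F.roots.toFinset.card + (wronskian p q).natDegree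
      = ∑ z ∈ F.roots.toFinset, (rootMultiplicity z (wronskian p q) + 1) := by
        rw [Finset.sum_add_distrib, sum_rootMultiplicity_eq_natDegree hWF,
          Finset.card_eq_sum_ones, add_comm]
    _ = ∑ z ∈ F.roots.toFinset, rootMultiplicity z F :=
        Finset.sum_congr rfl fun z hz =>
          h.rootMultiplicity_wronskian_add_one hF <|
            isRoot_of_mem_roots (Multiset.mem_toFinset.1 hz)
    _ = F.natDegree := sum_rootMultiplicity_eq_natDegree fun z hz => Multiset.mem_toFinset.2 hz

end Polynomial

/-- Proposition 1(b): if `j = j₁/j₂` is a rational Belyi function unramified outside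
`{0,1,∞}` with `deg j₁ = N > deg j₂` and `N ≥ 1`, then the radical `Λ` of
`j₁·j₂·(j₁ − j₂)` has degree `N + 1`, i.e. `j₁·j₂·(j₁−j₂)` has exactly `N + 1`
distinct complex roots. -/
theorem belyi_radical_degree
    (j₁ j₂ : Polynomial ℂ)
    (hcop : IsCoprime j₁ j₂)
    (hdeg : j₂.degree < j₁.degree)
    (hN : 1 ≤ j₁.natDegree)
    (hunram : ∀ z : ℂ, (derivative j₁ * j₂ - j₁ * derivative j₂).IsRoot z →
      (j₁ * j₂ * (j₁ - j₂)).IsRoot z) :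
    (j₁ * j₂ * (j₁ - j₂)).roots.toFinset.card = j₁.natDegree + 1 := by
  have hj₁ : j₁ ≠ 0 := ne_zero_of_degree_gt hdeg
  have hj₂ : j₂ ≠ 0 := by
    rintro rfl
    have := natDegree_eq_zero_of_isUnit (isCoprime_zero_right.1 hcop)
    omega
  have hlt : j₂.natDegree < j₁.natDegree := natDegree_lt_natDegree hj₂ hdeg
  have hsub : (j₁ - j₂).natDegree = j₁.natDegree := natDegree_sub_eq_left_of_natDegree_lt hlt
  have hsub₀ : j₁ - j₂ ≠ 0 := fun h => by rw [h, natDegree_zero] at hsub; omega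
  have hF : j₁ * j₂ * (j₁ - j₂) ≠ 0 := mul_ne_zero (mul_ne_zero hj₁ hj₂) hsub₀
  have hW : derivative j₁ * j₂ - j₁ * derivative j₂ = -wronskian j₁ j₂ := by
    rw [wronskian]; ring
  have hcount := hcop.card_roots_toFinset_add_natDegree_wronskian hF fun z hz =>
    hunram z (by simpa [hW] using hz)
  rw [natDegree_wronskian hj₁ hj₂ hlt.ne', natDegree_mul (mul_ne_zero hj₁ hj₂) hsub₀,
    natDegree_mul hj₁ hj₂, hsub] at hcount
  omega
end

section
/- Let j₁, j₂ ∈ ℂ[z] be coprime polynomials with N := deg j₁ > deg j₂ =: M and N ≥ 1, and suppose that j = j₁/j₂ is unramified outside {0,1,∞}, i.e. every complex root of j₁′j₂ − j₁j₂′ is a root of j₁·j₂·(j₁ − j₂). Let Λ ∈ ℂ[z] be the monic radical of j₁j₂(j₁−j₂), i.e. Λ(z) = ∏ₜ (z − t) where t runs over the distinct complex roots of j₁·j₂·(j₁−j₂). Then there exists a nonzero constant c ∈ ℂ such that Λ·(j₁′j₂ − j₁j₂′) = c·j₁·j₂·(j₁ − j₂) as polynomials. -/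
/-! Put `a = j₁`, `b = -j₂`, `c = j₂ - j₁`: they are pairwise coprime, `a + b + c = 0`,
`abc = j₁j₂(j₁ - j₂)`, and `W(a, b) = W(b, c) = W(c, a) = j₁′j₂ − j₁j₂′`. At a root `t` of
multiplicity `m` of `a`, writing `a = (X - t)^m g` gives
`W(a, b) = (X - t)^(m-1) ((X - t)(g b' - g' b) - m g b)`, and the last factor is `-m g(t) b(t) ≠ 0`
at `t`; so `W` vanishes at each root of `abc` to order one less than `abc`, and by hypothesis
nowhere else. Hence `Λ W` and `abc` have the same roots with multiplicity, so over `ℂ` they are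
proportional. -/

open Polynomial

theorem IsCoprime.of_add_add_eq_zero {R : Type*} [CommRing R] {a b c : R} (h : a + b + c = 0)
    (hab : IsCoprime a b) : IsCoprime b c := by
  obtain ⟨u, v, huv⟩ := hab
  exact ⟨v - u, -u, by linear_combination huv - u * h⟩

namespace Polynomial

variable {K : Type*} [Field K]

theorem _root_.IsCoprime.eval_ne_zero_of_isRoot {p q : K[X]} (h : IsCoprime p q) {t : K}
    (hp : p.IsRoot t) : q.eval t ≠ 0 := by
  simpa [hp.eq_zero] using aeval_ne_zero_of_isCoprime h t

theorem exists_C_mul_eq_of_roots_eq [IsAlgClosed K] {p q : K[X]} (hp : p ≠ 0) (hq : q ≠ 0)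
    (h : p.roots = q.roots) : ∃ k : K, k ≠ 0 ∧ p = C k * q := by
  have hlq : q.leadingCoeff ≠ 0 := leadingCoeff_ne_zero.2 hq
  refine ⟨p.leadingCoeff / q.leadingCoeff, div_ne_zero (leadingCoeff_ne_zero.2 hp) hlq, ?_⟩
  set Q := (q.roots.map (X - C ·)).prod with hQ
  calc p = C p.leadingCoeff * Q := by rw [hQ, ← h]; exact (IsAlgClosed.splits p).eq_prod_roots
    _ = C (p.leadingCoeff / q.leadingCoeff) * (C q.leadingCoeff * Q) := by
      rw [← mul_assoc, ← C_mul, div_mul_cancel₀ _ hlq]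
    _ = C (p.leadingCoeff / q.leadingCoeff) * q := by rw [← (IsAlgClosed.splits q).eq_prod_roots]

theorem rootMultiplicity_prod_roots_toFinset [DecidableEq K] {p : K[X]} (hp : p ≠ 0) (t : K) :
    rootMultiplicity t (∏ s ∈ p.roots.toFinset, (X - C s)) = if p.IsRoot t then 1 else 0 := by
  simp only [← count_roots, roots_prod_X_sub_C, Multiset.count_eq_of_nodup p.roots.toFinset.nodup,
    Finset.mem_val, Multiset.mem_toFinset, mem_roots hp]

variable [CharZero K]

theorem rootMultiplicity_wronskian_of_isRoot {a b : K[X]} (hab : IsCoprime a b) (ha : a ≠ 0)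
    {t : K} (ht : a.IsRoot t) :
    rootMultiplicity t (wronskian a b) = rootMultiplicity t a - 1 := by
  obtain ⟨g, hag, hg⟩ := exists_eq_pow_rootMultiplicity_mul_and_not_dvd a ha t
  obtain ⟨k, hk⟩ := Nat.exists_eq_add_one_of_ne_zero ((rootMultiplicity_pos ha).2 ht).ne'
  rw [hk] at hag
  set R := (X - C t) * (g * derivative b - derivative g * b) - C ((k + 1 : ℕ) : K) * g * b
  have hW : wronskian a b = R * (X - C t) ^ k := by
    rw [hag, wronskian, derivative_mul, derivative_X_sub_C_pow]
    simp only [R, Nat.add_sub_cancel]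
    ring
  have hR : R.eval t ≠ 0 := by
    have hgt : g.eval t ≠ 0 := by rwa [dvd_iff_isRoot] at hg
    simp only [R, eval_sub, eval_mul, eval_X, eval_C, sub_self, zero_mul, zero_sub, neg_ne_zero]
    exact mul_ne_zero (mul_ne_zero (Nat.cast_ne_zero.2 k.succ_ne_zero) hgt)
      (hab.eval_ne_zero_of_isRoot ht)
  rw [hW, rootMultiplicity_mul_X_sub_C_pow (fun h ↦ hR (by rw [h, eval_zero])),
    rootMultiplicity_eq_zero hR, hk, Nat.add_sub_cancel, zero_add]

theorem rootMultiplicity_wronskian_add_one_of_isRoot_left {a b c : K[X]} (h : a + b + c = 0)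
    (hab : IsCoprime a b) (ha : a ≠ 0) {t : K} (ht : a.IsRoot t) :
    rootMultiplicity t (wronskian a b) + 1 = rootMultiplicity t (a * b * c) := by
  have hbt : b.eval t ≠ 0 := hab.eval_ne_zero_of_isRoot ht
  have hct : c.eval t ≠ 0 := by
    rw [show c = -(a + b) by linear_combination h, eval_neg, eval_add, ht.eq_zero, zero_add]
    exact neg_ne_zero.2 hbt
  have habc : a * b * c ≠ 0 := by
    refine mul_ne_zero (mul_ne_zero ha ?_) ?_ <;> rintro rfl <;> simp_all
  rw [rootMultiplicity_mul habc, rootMultiplicity_mul (left_ne_zero_of_mul habc),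
    rootMultiplicity_eq_zero hbt, rootMultiplicity_eq_zero hct,
    rootMultiplicity_wronskian_of_isRoot hab ha ht]
  have := (rootMultiplicity_pos ha).2 ht
  omega

theorem rootMultiplicity_wronskian_add_one_of_isRoot {a b c : K[X]} (h : a + b + c = 0)
    (hab : IsCoprime a b) (habc : a * b * c ≠ 0) {t : K} (ht : (a * b * c).IsRoot t) :
    rootMultiplicity t (wronskian a b) + 1 = rootMultiplicity t (a * b * c) := by
  have hbca : b + c + a = 0 := by linear_combination h
  have hbc : IsCoprime b c := hab.of_add_add_eq_zero h
  obtain ⟨⟨ha, hb⟩, hc⟩ := mul_ne_zero_iff.1 habc |>.imp_left mul_ne_zero_iff.1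
  simp only [IsRoot, eval_mul, mul_eq_zero] at ht
  rcases ht with (ht | ht) | ht
  · exact rootMultiplicity_wronskian_add_one_of_isRoot_left h hab ha ht
  · rw [wronskian_eq_of_sum_zero h, show a * b * c = b * c * a by ring]
    exact rootMultiplicity_wronskian_add_one_of_isRoot_left hbca hbc hb ht
  · rw [wronskian_eq_of_sum_zero h, wronskian_eq_of_sum_zero hbca,
      show a * b * c = c * a * b by ring]
    exact rootMultiplicity_wronskian_add_one_of_isRoot_left (by linear_combination h)
      (hbc.of_add_add_eq_zero hbca) hc ht

theorem exists_radical_mul_wronskian_eq_C_mul [IsAlgClosed K] [DecidableEq K] {a b c : K[X]}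
    (h : a + b + c = 0) (hab : IsCoprime a b) (habc : a * b * c ≠ 0) (hW : wronskian a b ≠ 0)
    (hunram : ∀ t, (wronskian a b).IsRoot t → (a * b * c).IsRoot t) :
    ∃ k : K, k ≠ 0 ∧
      (∏ t ∈ (a * b * c).roots.toFinset, (X - C t)) * wronskian a b = C k * (a * b * c) := by
  have hΛ : ∏ t ∈ (a * b * c).roots.toFinset, (X - C t) ≠ 0 :=
    Finset.prod_ne_zero_iff.2 fun t _ ↦ X_sub_C_ne_zero t
  refine exists_C_mul_eq_of_roots_eq (mul_ne_zero hΛ hW) habc (Multiset.ext.2 fun t ↦ ?_)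
  rw [count_roots, count_roots, rootMultiplicity_mul (mul_ne_zero hΛ hW),
    rootMultiplicity_prod_roots_toFinset habc]
  split_ifs with ht
  · rw [add_comm, rootMultiplicity_wronskian_add_one_of_isRoot h hab habc ht]
  · rw [rootMultiplicity_eq_zero ht, rootMultiplicity_eq_zero (mt (hunram t) ht)]

end Polynomial

theorem belyi_radical_wronskian_general
    (j₁ j₂ : Polynomial ℂ)
    (hcop : IsCoprime j₁ j₂)
    (hdeg : j₂.degree < j₁.degree)
    (hunram : ∀ z : ℂ, (derivative j₁ * j₂ - j₁ * derivative j₂).IsRoot z →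
      (j₁ * j₂ * (j₁ - j₂)).IsRoot z)
    (Λ : Polynomial ℂ)
    (hΛ : Λ = ∏ t ∈ (j₁ * j₂ * (j₁ - j₂)).roots.toFinset, (X - C t)) :
    ∃ c : ℂ, c ≠ 0 ∧
      Λ * (derivative j₁ * j₂ - j₁ * derivative j₂) = C c * (j₁ * j₂ * (j₁ - j₂)) := by
  rcases eq_or_ne j₂ 0 with rfl | hj₂
  · exact ⟨1, one_ne_zero, by simp⟩
  have hsum : j₁ + -j₂ + (j₂ - j₁) = 0 := by ring
  have hP : j₁ * -j₂ * (j₂ - j₁) = j₁ * j₂ * (j₁ - j₂) := by ring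
  have hW : wronskian j₁ (-j₂) = derivative j₁ * j₂ - j₁ * derivative j₂ := by
    rw [wronskian, derivative_neg]; ring
  have hj₁ : derivative j₁ ≠ 0 := by
    rw [Ne, derivative_eq_zero, ← Ne, ← Nat.pos_iff_ne_zero, natDegree_pos_iff_degree_pos]
    exact (zero_le_degree_iff.2 hj₂).trans_lt hdeg
  have hP0 : j₁ * -j₂ * (j₂ - j₁) ≠ 0 := by
    rw [hP]
    exact mul_ne_zero (mul_ne_zero (ne_zero_of_degree_gt hdeg) hj₂)
      (sub_ne_zero.2 fun h ↦ hdeg.ne (by rw [h]))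
  have hW0 : wronskian j₁ (-j₂) ≠ 0 := fun h0 ↦
    hj₁ (hcop.neg_right.wronskian_eq_zero_iff.1 h0).1
  subst hΛ
  rw [← hP, ← hW] at hunram ⊢
  exact exists_radical_mul_wronskian_eq_C_mul hsum hcop.neg_right hP0 hW0 hunram

/-- For a rational Belyi function `j = j₁/j₂` unramified outside `{0,1,∞}`, the
monic radical `Λ` of `j₁·j₂·(j₁−j₂)` satisfies
`Λ·(j₁′j₂ − j₁j₂′) = c·j₁·j₂·(j₁ − j₂)` for some nonzero constant `c`. -/
theorem belyi_radical_wronskian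
    (j₁ j₂ : Polynomial ℂ)
    (hcop : IsCoprime j₁ j₂)
    (hdeg : j₂.degree < j₁.degree)
    (hN : 1 ≤ j₁.natDegree)
    (hunram : ∀ z : ℂ, (derivative j₁ * j₂ - j₁ * derivative j₂).IsRoot z →
      (j₁ * j₂ * (j₁ - j₂)).IsRoot z)
    (Λ : Polynomial ℂ)
    (hΛ : Λ = ∏ t ∈ (j₁ * j₂ * (j₁ - j₂)).roots.toFinset, (X - C t)) :
    ∃ c : ℂ, c ≠ 0 ∧
      Λ * (derivative j₁ * j₂ - j₁ * derivative j₂) = C c * (j₁ * j₂ * (j₁ - j₂)) :=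
  belyi_radical_wronskian_general j₁ j₂ hcop hdeg hunram Λ hΛ
end

section
/- Let j₁, j₂ ∈ ℂ[z] be coprime polynomials with N := deg j₁ > deg j₂ =: M and N ≥ 1, suppose j = j₁/j₂ is unramified outside {0,1,∞} (every complex root of j₁′j₂ − j₁j₂′ is a root of j₁·j₂·(j₁−j₂)), let Λ be the monic radical of j₁j₂(j₁−j₂), let α, β, γ ∈ ℂ, and let q₁, q₂ ∈ ℂ(z) be the rational functions q₁ = Λ′/Λ + (γ−1)·j₁′/j₁ + (−γ+α+β)·(j₁−j₂)′/(j₁−j₂) + (α−β)·j₂′/j₂ and q₂ = αβ·(j₁′/j₁)·((j₁−j₂)′/(j₁−j₂)) − α·(j₂′/j₂)·(j₂′/j₂ − Λ′/Λ − (γ−β−1)·j₁′/j₁ + (γ−α)·(j₁−j₂)′/(j₁−j₂)) + α·j₂″/j₂. Suppose w ∈ ℂ satisfies one of the following: (i) w is a root of j₁ of multiplicity a ≥ 2 with a·(1−γ) = 1; (ii) w is a root of j₁ − j₂ of multiplicity b ≥ 2 with b·(γ−α−β) = 1; (iii) w is a root of j₂ of multiplicity c ≥ 2 with c·(β−α)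 = 1. Then neither q₁ nor q₂ has a pole at w. -/
/-!
Near `w` every `p'/p` has at most a simple pole, with residue the multiplicity of `w` as a root
of `p`; in particular `Λ'/Λ` has residue `1`. So the residue of `q₁` at `w` is `1 - a(1 - γ)`,
`1 - b(γ - α - β)` or `1 - c(β - α)`, which vanishes. In case (i) only one factor of each product
in `q₂` has a pole, and the residue of `q₂` is again a multiple of `1 - a(1 - γ)`, because
`j₁ - j₂` and `-j₂` agree to first order at `w`. Case (ii) is case (i) for `1 - j`, which leaves
`q₁, q₂` unchanged after `γ ↦ α + β + 1 - γ`.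

In case (iii) the double pole of `q₂` cancels identically, and the residue cancels because `j` is
unramified outside `{0, 1, ∞}`: comparing root multiplicities, `(j₁'j₂ - j₁j₂')·Λ` is a constant
multiple of `j₁j₂(j₁ - j₂)`, and this identity to first order at `w` ties the regular part of
`Λ'/Λ` at `w` to those of `j₁'/j₁` and `j₂'/j₂`.
-/

open Polynomial

namespace RatFunc

variable {K : Type*} [Field K] {w : K} {q r : RatFunc K} {u v ρ σ : K}

def IsRegularAt (w : K) (q : RatFunc K) : Prop := q.denom.eval w ≠ 0

def HasValueAt (w : K) (q : RatFunc K) (v : K) : Prop :=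
  IsRegularAt w q ∧ q.eval (RingHom.id K) w = v

/-- `q` has at most a simple pole at `w`, with residue `ρ`. -/
def HasSimplePoleAt (w : K) (q : RatFunc K) (ρ : K) : Prop :=
  IsRegularAt w (q - C ρ / (X - C w))

theorem X_sub_C_ne_zero (w : K) : (X - C w : RatFunc K) ≠ 0 := by
  rw [← algebraMap_X, ← algebraMap_C, ← map_sub]
  exact algebraMap_ne_zero (Polynomial.X_sub_C_ne_zero w)

theorem IsRegularAt.of_eq_div {n d : K[X]} (hd : d.eval w ≠ 0)
    (hq : q = algebraMap _ _ n / algebraMap _ _ d) : IsRegularAt w q := fun h =>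
  hd (eval_eq_zero_of_dvd_of_eval_eq_zero (hq ▸ denom_div_dvd n d) h)

theorem isRegularAt_algebraMap (p : K[X]) : IsRegularAt w (algebraMap _ _ p) := by
  simp [IsRegularAt]

theorem IsRegularAt.add (hq : IsRegularAt w q) (hr : IsRegularAt w r) :
    IsRegularAt w (q + r) := fun h => mul_ne_zero hq hr <| by
  simpa only [Polynomial.eval_mul] using eval_eq_zero_of_dvd_of_eval_eq_zero (denom_add_dvd q r) h

theorem IsRegularAt.mul (hq : IsRegularAt w q) (hr : IsRegularAt w r) :
    IsRegularAt w (q * r) := fun h => mul_ne_zero hq hr <| by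
  simpa only [Polynomial.eval_mul] using eval_eq_zero_of_dvd_of_eval_eq_zero (denom_mul_dvd q r) h

theorem hasValueAt_C (w c : K) : HasValueAt w (C c) c :=
  ⟨by simp [IsRegularAt], by simp⟩

theorem HasValueAt.add (hq : HasValueAt w q u) (hr : HasValueAt w r v) :
    HasValueAt w (q + r) (u + v) :=
  ⟨hq.1.add hr.1, by rw [eval_add _ _ hq.1 hr.1, hq.2, hr.2]⟩

theorem HasValueAt.mul (hq : HasValueAt w q u) (hr : HasValueAt w r v) :
    HasValueAt w (q * r) (u * v) :=
  ⟨hq.1.mul hr.1, by rw [eval_mul _ _ hq.1 hr.1, hq.2, hr.2]⟩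

theorem HasValueAt.sub (hq : HasValueAt w q u) (hr : HasValueAt w r v) :
    HasValueAt w (q - r) (u - v) := by
  simpa [sub_eq_add_neg, neg_mul_eq_neg_mul] using hq.add ((hasValueAt_C w (-1)).mul hr)

theorem hasValueAt_div (n : K[X]) {d : K[X]} (hd : d.eval w ≠ 0) :
    HasValueAt w (algebraMap _ _ n / algebraMap _ _ d) (n.eval w / d.eval w) := by
  have hreg : IsRegularAt w (algebraMap _ _ n / algebraMap _ _ d) := .of_eq_div hd rfl
  refine ⟨hreg, eq_div_of_mul_eq hd ?_⟩
  have hd' : algebraMap K[X] (RatFunc K) d ≠ 0 := algebraMap_ne_zero fun h => by simp [h] at hd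
  simpa [div_mul_cancel₀ _ hd'] using (eval_mul _ _ hreg (isRegularAt_algebraMap d)).symm

theorem HasValueAt.isRegularAt_div_X_sub_C (hq : HasValueAt w q 0) :
    IsRegularAt w (q / (X - C w)) := by
  obtain ⟨hreg, hval⟩ := hq
  have hnum : q.num.IsRoot w := by
    have hden : q.denom.eval w ≠ 0 := hreg
    simpa [RatFunc.eval, hden] using hval
  obtain ⟨n, hn⟩ := dvd_iff_isRoot.mpr hnum
  refine .of_eq_div (n := n) hreg ?_
  have hX := X_sub_C_ne_zero (K := K) w
  rw [div_eq_iff hX, div_mul_eq_mul_div, eq_div_iff (algebraMap_ne_zero q.denom_ne_zero)]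
  nth_rw 1 [← num_div_denom q]
  rw [div_mul_cancel₀ _ (algebraMap_ne_zero q.denom_ne_zero), hn]
  simp [mul_comm]

theorem HasValueAt.hasSimplePoleAt (hq : HasValueAt w q v) : HasSimplePoleAt w q 0 := by
  simpa [HasSimplePoleAt] using hq.1

theorem HasSimplePoleAt.isRegularAt (hq : HasSimplePoleAt w q ρ) (hρ : ρ = 0) :
    IsRegularAt w q := by
  simpa [HasSimplePoleAt, hρ] using hq

theorem HasValueAt.hasSimplePoleAt_div_X_sub_C (hq : HasValueAt w q v) :
    HasSimplePoleAt w (q / (X - C w)) v := by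
  have h := hq.sub (hasValueAt_C w v)
  rw [sub_self] at h
  unfold HasSimplePoleAt
  convert h.isRegularAt_div_X_sub_C using 1
  ring

theorem HasSimplePoleAt.add (hq : HasSimplePoleAt w q ρ) (hr : HasSimplePoleAt w r σ) :
    HasSimplePoleAt w (q + r) (ρ + σ) := by
  unfold HasSimplePoleAt
  convert IsRegularAt.add hq hr using 1
  rw [map_add]; ring

theorem HasSimplePoleAt.const_mul (c : K) (hq : HasSimplePoleAt w q ρ) :
    HasSimplePoleAt w (C c * q) (c * ρ) := by
  unfold HasSimplePoleAt
  convert (hasValueAt_C w c).1.mul hq using 1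
  rw [map_mul]; ring

theorem HasSimplePoleAt.sub (hq : HasSimplePoleAt w q ρ) (hr : HasSimplePoleAt w r σ) :
    HasSimplePoleAt w (q - r) (ρ - σ) := by
  have h := hq.add (hr.const_mul (-1))
  unfold HasSimplePoleAt at h ⊢
  convert h using 1
  rw [map_sub, map_add, map_mul, map_neg, map_one]; ring

theorem HasSimplePoleAt.mul_hasValueAt (hq : HasSimplePoleAt w q ρ) (hr : HasValueAt w r v) :
    HasSimplePoleAt w (q * r) (ρ * v) := by
  unfold HasSimplePoleAt
  convert (IsRegularAt.mul hq hr.1).add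
    (((hasValueAt_C w ρ).mul hr).hasSimplePoleAt_div_X_sub_C) using 1
  rw [map_mul]; ring

theorem HasValueAt.mul_hasSimplePoleAt (hq : HasValueAt w q v) (hr : HasSimplePoleAt w r ρ) :
    HasSimplePoleAt w (q * r) (v * ρ) := by
  simpa only [mul_comm] using hr.mul_hasValueAt hq

end RatFunc

namespace Polynomial

variable {K : Type*} [Field K] {w : K} {p q : K[X]}

noncomputable def logDeriv (p : K[X]) : RatFunc K :=
  algebraMap K[X] (RatFunc K) (derivative p) / algebraMap K[X] (RatFunc K) p

theorem logDeriv_mul (hp : p ≠ 0) (hq : q ≠ 0) :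
    (p * q).logDeriv = p.logDeriv + q.logDeriv := by
  have hp' := RatFunc.algebraMap_ne_zero hp
  have hq' := RatFunc.algebraMap_ne_zero hq
  simp only [logDeriv, derivative_mul, map_add, map_mul]
  field_simp

theorem logDeriv_neg (p : K[X]) : (-p).logDeriv = p.logDeriv := by
  simp [logDeriv, neg_div_neg_eq]

theorem logDeriv_X_sub_C_pow (w : K) (m : ℕ) :
    ((X - C w) ^ m).logDeriv = (m : RatFunc K) / (RatFunc.X - RatFunc.C w) := by
  have hX := RatFunc.X_sub_C_ne_zero w
  cases m with
  | zero => simp [logDeriv]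
  | succ k =>
    simp only [logDeriv, derivative_X_sub_C_pow, map_mul, map_pow, map_sub, map_natCast,
      RatFunc.algebraMap_X, RatFunc.algebraMap_C, Nat.add_sub_cancel]
    field_simp
    ring

theorem hasValueAt_logDeriv (hp : p.eval w ≠ 0) :
    RatFunc.HasValueAt w p.logDeriv ((derivative p).eval w / p.eval w) :=
  RatFunc.hasValueAt_div _ hp

theorem hasSimplePoleAt_logDeriv (hp : p ≠ 0) :
    RatFunc.HasSimplePoleAt w p.logDeriv (p.rootMultiplicity w) := by
  obtain ⟨g, hpg, hg⟩ := exists_eq_pow_rootMultiplicity_mul_and_not_dvd p hp w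
  have hgw : g.eval w ≠ 0 := fun h => hg (dvd_iff_isRoot.mpr h)
  have hg0 : g ≠ 0 := fun h => hgw (by simp [h])
  have hsplit : p.logDeriv = (p.rootMultiplicity w : RatFunc K) / (RatFunc.X - RatFunc.C w)
      + g.logDeriv := by
    conv_lhs => rw [hpg]
    rw [logDeriv_mul (pow_ne_zero _ (X_sub_C_ne_zero w)) hg0, logDeriv_X_sub_C_pow]
  unfold RatFunc.HasSimplePoleAt
  rw [hsplit, map_natCast, add_sub_cancel_left]
  exact (hasValueAt_logDeriv hgw).1

theorem rootMultiplicity_neg_s7 (p : K[X]) (w : K) :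
    (-p).rootMultiplicity w = p.rootMultiplicity w := by
  classical
  rw [← count_roots, ← count_roots, roots_neg]

theorem IsCoprime.eval_ne_zero_or (h : IsCoprime p q) (w : K) : p.eval w ≠ 0 ∨ q.eval w ≠ 0 := by
  obtain ⟨u, v, huv⟩ := h
  by_contra! hpq
  simpa [hpq.1, hpq.2] using congrArg (eval w) huv

theorem rootMultiplicity_wronskian_add_one_s7 [CharZero K] (hp : p ≠ 0) (hpw : p.IsRoot w)
    (hqw : ¬q.IsRoot w) :
    (derivative p * q - p * derivative q).rootMultiplicity w + 1 = p.rootMultiplicity w := by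
  obtain ⟨g, hpg, hg⟩ := exists_eq_pow_rootMultiplicity_mul_and_not_dvd p hp w
  obtain ⟨k, hk⟩ := Nat.exists_eq_add_one.mpr ((rootMultiplicity_pos hp).mpr hpw)
  rw [hk] at hpg ⊢
  have hgw : ¬g.IsRoot w := fun h => hg (dvd_iff_isRoot.mpr h)
  set V := C ((k : K) + 1) * g * q + (X - C w) * (derivative g * q - g * derivative q)
  have hW : derivative p * q - p * derivative q = V * (X - C w) ^ k := by
    rw [hpg, derivative_mul, derivative_X_sub_C_pow]
    simp only [V, map_add, map_natCast, Nat.cast_add, Nat.cast_one,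
      Nat.add_sub_cancel, map_one]
    ring
  have hVw : ¬V.IsRoot w := by
    simp only [V, IsRoot, eval_add, eval_mul, eval_C, eval_sub, eval_X, sub_self, zero_mul,
      add_zero]
    exact mul_ne_zero (mul_ne_zero (by exact_mod_cast k.succ_ne_zero) hgw) hqw
  rw [hW, rootMultiplicity_mul_X_sub_C_pow (fun h => hVw (by simp [h])),
    rootMultiplicity_eq_zero hVw, zero_add]

theorem rootMultiplicity_prod_roots_toFinset_X_sub_C [DecidableEq K] (P : K[X]) (w : K) :
    (∏ t ∈ P.roots.toFinset, (X - C t)).rootMultiplicity w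
      = if P.IsRoot w ∧ P ≠ 0 then 1 else 0 := by
  rw [← count_roots, roots_prod_X_sub_C, Multiset.count_eq_of_nodup (Finset.nodup _)]
  simp [and_comm]

section Wronskian

variable [CharZero K] {j₁ j₂ : K[X]}

theorem rootMultiplicity_wronskian_add_one_of_isRoot_mul (hcop : IsCoprime j₁ j₂)
    (hP : j₁ * j₂ * (j₁ - j₂) ≠ 0) {z : K} (hz : (j₁ * j₂ * (j₁ - j₂)).IsRoot z) :
    (derivative j₁ * j₂ - j₁ * derivative j₂).rootMultiplicity z + 1
      = (j₁ * j₂ * (j₁ - j₂)).rootMultiplicity z := by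
  have h₁₂ := left_ne_zero_of_mul hP
  have h₁ := left_ne_zero_of_mul h₁₂
  have h₂ := right_ne_zero_of_mul h₁₂
  have h₃ := right_ne_zero_of_mul hP
  rw [rootMultiplicity_mul hP, rootMultiplicity_mul h₁₂]
  have hcz := hcop.eval_ne_zero_or z
  simp only [IsRoot, eval_mul, mul_eq_zero] at hz
  rcases hz with (hz | hz) | hz
  · have h₂z : ¬j₂.IsRoot z := by simpa [hz] using hcz
    have h₃z : ¬(j₁ - j₂).IsRoot z := by simpa [hz] using h₂z
    rw [rootMultiplicity_eq_zero h₂z, rootMultiplicity_eq_zero h₃z]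
    exact rootMultiplicity_wronskian_add_one_s7 h₁ hz h₂z
  · have h₁z : ¬j₁.IsRoot z := by simpa [hz] using hcz
    have h₃z : ¬(j₁ - j₂).IsRoot z := by simpa [hz] using h₁z
    rw [rootMultiplicity_eq_zero h₁z, rootMultiplicity_eq_zero h₃z,
      ← rootMultiplicity_neg_s7, ← rootMultiplicity_wronskian_add_one_s7 h₂ hz h₁z]
    ring_nf
  · have h₁₂z : j₁.eval z = j₂.eval z := by rwa [eval_sub, sub_eq_zero] at hz
    have h₂z : ¬j₂.IsRoot z := fun h => hcz.elim (· (h₁₂z.trans h)) (· h)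
    have h₁z : ¬j₁.IsRoot z := fun h => h₂z (h₁₂z.symm.trans h)
    rw [rootMultiplicity_eq_zero h₁z, rootMultiplicity_eq_zero h₂z,
      ← rootMultiplicity_wronskian_add_one_s7 h₃ hz h₂z, derivative_sub]
    ring_nf

theorem associated_wronskian_mul_prod_roots [IsAlgClosed K] [DecidableEq K] (hcop : IsCoprime j₁ j₂)
    (hP : j₁ * j₂ * (j₁ - j₂) ≠ 0) (hW : derivative j₁ * j₂ - j₁ * derivative j₂ ≠ 0)
    (hunram : ∀ z : K, (derivative j₁ * j₂ - j₁ * derivative j₂).IsRoot z →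
      (j₁ * j₂ * (j₁ - j₂)).IsRoot z) :
    Associated ((derivative j₁ * j₂ - j₁ * derivative j₂)
      * ∏ t ∈ (j₁ * j₂ * (j₁ - j₂)).roots.toFinset, (X - C t)) (j₁ * j₂ * (j₁ - j₂)) := by
  set Λ := ∏ t ∈ (j₁ * j₂ * (j₁ - j₂)).roots.toFinset, (X - C t)
  have hWΛ := mul_ne_zero hW (monic_prod_of_monic _ _ fun t _ => monic_X_sub_C t : Λ.Monic).ne_zero
  rw [IsAlgClosed.associated_iff_roots_eq_roots hWΛ hP]
  ext z
  rw [count_roots, count_roots, rootMultiplicity_mul hWΛ,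
    rootMultiplicity_prod_roots_toFinset_X_sub_C]
  by_cases hz : (j₁ * j₂ * (j₁ - j₂)).IsRoot z
  · rw [if_pos ⟨hz, hP⟩, rootMultiplicity_wronskian_add_one_of_isRoot_mul hcop hP hz]
  · rw [if_neg (fun h => hz h.1), rootMultiplicity_eq_zero hz,
      rootMultiplicity_eq_zero (fun h => hz (hunram z h))]

end Wronskian

theorem eval_logDeriv_radical_cofactor [CharZero K] {j₁ j₂ g Λ μ : K[X]} {k : ℕ}
    (hj₂ : j₂ = (X - C w) ^ (k + 2) * g) (hΛ : Λ = (X - C w) * μ)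
    (hassoc : Associated ((derivative j₁ * j₂ - j₁ * derivative j₂) * Λ) (j₁ * j₂ * (j₁ - j₂)))
    (hj₁ : j₁.eval w ≠ 0) (hg : g.eval w ≠ 0) (hμ : μ.eval w ≠ 0) :
    ((k : K) + 2) * ((derivative μ).eval w / μ.eval w)
      = ((k : K) + 3) * ((derivative j₁).eval w / j₁.eval w)
        - (derivative g).eval w / g.eval w := by
  obtain ⟨u, hu⟩ := hassoc
  obtain ⟨r, -, hr⟩ := isUnit_iff.mp u.isUnit
  subst hj₂ hΛ
  -- `hlocal` is `(j₁'j₂ - j₁j₂') Λ r = j₁ j₂ (j₁ - j₂)` divided by `(X - C w) ^ (k + 2)`; its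
  -- value at `w` determines `r`, and its derivative at `w` then gives the claim.
  have hlocal : ((X - C w) * (derivative j₁ * g - j₁ * derivative g) - ((k : K[X]) + 2) * j₁ * g)
      * μ * C r = j₁ * g * (j₁ - (X - C w) ^ (k + 2) * g) := by
    refine mul_left_cancel₀ (pow_ne_zero (k + 2) (X_sub_C_ne_zero w)) ?_
    rw [← hr, derivative_mul, derivative_X_sub_C_pow] at hu
    simp only [Nat.cast_add, Nat.cast_ofNat, map_add, map_natCast, map_ofNat,
      show k + 2 - 1 = k + 1 from rfl] at hu
    linear_combination hu
  have E0 := congrArg (eval w) hlocal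
  have E1 := congrArg (fun p => (derivative p).eval w) hlocal
  simp [derivative_X_sub_C_pow] at E0 E1
  have hJ : eval w j₁ = -((k + 2) * eval w μ * r) := by
    apply mul_left_cancel₀ (mul_ne_zero hj₁ hg)
    linear_combination -E0
  have hr0 : r ≠ 0 := by rintro rfl; simp [hJ] at hj₁
  field_simp
  apply mul_right_cancel₀ hr0
  linear_combination (-1) * E1
    - (2 * eval w (derivative j₁) * eval w g + eval w j₁ * eval w (derivative g)) * hJ

theorem algebraMap_derivative_derivative_div_X_sub_C_pow_mul {g : K[X]} (hg : g ≠ 0) (w : K)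
    (k : ℕ) :
    algebraMap K[X] (RatFunc K) (derivative (derivative ((X - C w) ^ (k + 2) * g)))
        / algebraMap K[X] (RatFunc K) ((X - C w) ^ (k + 2) * g)
      = ((k : RatFunc K) + 2) * ((k : RatFunc K) + 1) / (RatFunc.X - RatFunc.C w) ^ 2
        + 2 * ((k : RatFunc K) + 2) * g.logDeriv / (RatFunc.X - RatFunc.C w)
        + algebraMap K[X] (RatFunc K) (derivative (derivative g))
          / algebraMap K[X] (RatFunc K) g := by
  have hX := RatFunc.X_sub_C_ne_zero w
  have hg' := RatFunc.algebraMap_ne_zero hg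
  have hpoly : derivative (derivative ((X - C w) ^ (k + 2) * g))
      = ((k : K[X]) + 2) * ((k : K[X]) + 1) * (X - C w) ^ k * g
        + 2 * ((k : K[X]) + 2) * (X - C w) ^ (k + 1) * derivative g
        + (X - C w) ^ (k + 2) * derivative (derivative g) := by
    simp only [derivative_mul, derivative_X_sub_C_pow, Nat.cast_add, Nat.cast_ofNat,
      Nat.cast_one, map_add, map_natCast, map_ofNat, map_one, show k + 2 - 1 = k + 1 from rfl,
      show k + 1 - 1 = k from rfl, derivative_natCast, derivative_ofNat]
    ring
  rw [hpoly]
  simp only [logDeriv, map_add, map_mul, map_pow, map_sub, map_natCast, map_ofNat, map_one,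
    RatFunc.algebraMap_X, RatFunc.algebraMap_C]
  field_simp
  ring

end Polynomial

open RatFunc (IsRegularAt HasValueAt HasSimplePoleAt hasValueAt_C hasValueAt_div)

section Pullback

variable {K : Type*} [Field K] {j₁ j₂ Λ : K[X]} {α β γ w : K}

-- `q₁` and `q₂` of the statement, where `Λ` is the radical of `j₁ j₂ (j₁ - j₂)`.
noncomputable def pullbackCoeff₁ (j₁ j₂ Λ : K[X]) (α β γ : K) : RatFunc K :=
  Λ.logDeriv + RatFunc.C (γ - 1) * j₁.logDeriv + RatFunc.C (-γ + α + β) * (j₁ - j₂).logDeriv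
    + RatFunc.C (α - β) * j₂.logDeriv

noncomputable def pullbackCoeff₂ (j₁ j₂ Λ : K[X]) (α β γ : K) : RatFunc K :=
  RatFunc.C (α * β) * j₁.logDeriv * (j₁ - j₂).logDeriv
    - RatFunc.C α * j₂.logDeriv * (j₂.logDeriv - Λ.logDeriv
        - RatFunc.C (γ - β - 1) * j₁.logDeriv + RatFunc.C (γ - α) * (j₁ - j₂).logDeriv)
    + RatFunc.C α * (algebraMap K[X] (RatFunc K) (derivative (derivative j₂))
        / algebraMap K[X] (RatFunc K) j₂)

theorem hasSimplePoleAt_pullbackCoeff₁ (hΛ : Λ ≠ 0) (h₁ : j₁ ≠ 0) (h₂ : j₂ ≠ 0)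
    (h₃ : j₁ - j₂ ≠ 0) :
    HasSimplePoleAt w (pullbackCoeff₁ j₁ j₂ Λ α β γ)
      (Λ.rootMultiplicity w + (γ - 1) * j₁.rootMultiplicity w
        + (-γ + α + β) * (j₁ - j₂).rootMultiplicity w + (α - β) * j₂.rootMultiplicity w) :=
  (((hasSimplePoleAt_logDeriv hΛ).add ((hasSimplePoleAt_logDeriv h₁).const_mul _)).add
    ((hasSimplePoleAt_logDeriv h₃).const_mul _)).add ((hasSimplePoleAt_logDeriv h₂).const_mul _)

theorem isRegularAt_pullbackCoeffs_over_zero [DecidableEq K]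
    (hcop : IsCoprime j₁ j₂)
    (hΛ : Λ = ∏ t ∈ (j₁ * j₂ * (j₁ - j₂)).roots.toFinset, (X - C t)) {a : ℕ} (ha : 2 ≤ a)
    (hm : j₁.rootMultiplicity w = a) (hγ : (a : K) * (1 - γ) = 1) :
    IsRegularAt w (pullbackCoeff₁ j₁ j₂ Λ α β γ)
      ∧ IsRegularAt w (pullbackCoeff₂ j₁ j₂ Λ α β γ) := by
  have h₁ : j₁ ≠ 0 := by rintro rfl; simp at hm; omega
  obtain ⟨hj₁w, hdj₁w⟩ := (one_lt_rootMultiplicity_iff_isRoot (t := w) h₁).mp (by omega)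
  have hj₂w : j₂.eval w ≠ 0 := (hcop.eval_ne_zero_or w).resolve_left (not_not.mpr hj₁w)
  have h₃w : (j₁ - j₂).eval w ≠ 0 := by simpa [hj₁w.eq_zero] using hj₂w
  have h₂ : j₂ ≠ 0 := by rintro rfl; simp at hj₂w
  have h₃ : j₁ - j₂ ≠ 0 := by rintro h; simp [h] at h₃w
  have hΛw : Λ.rootMultiplicity w = 1 := by
    rw [hΛ, rootMultiplicity_prod_roots_toFinset_X_sub_C, if_pos]
    exact ⟨by simp [hj₁w.eq_zero], mul_ne_zero (mul_ne_zero h₁ h₂) h₃⟩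
  have hΛ0 : Λ ≠ 0 := by rintro rfl; simp at hΛw
  constructor
  · refine (hasSimplePoleAt_pullbackCoeff₁ hΛ0 h₁ h₂ h₃).isRegularAt ?_
    rw [hΛw, hm, rootMultiplicity_eq_zero hj₂w, rootMultiplicity_eq_zero h₃w]
    push_cast
    linear_combination -hγ
  · have hL₂ := hasValueAt_logDeriv hj₂w
    have hL₃ := hasValueAt_logDeriv h₃w
    refine (((((hasSimplePoleAt_logDeriv h₁).const_mul (α * β)).mul_hasValueAt hL₃).sub
      (((hasValueAt_C w α).mul hL₂).mul_hasSimplePoleAt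
        (((hL₂.hasSimplePoleAt.sub (hasSimplePoleAt_logDeriv hΛ0)).sub
          ((hasSimplePoleAt_logDeriv h₁).const_mul _)).add (hL₃.hasSimplePoleAt.const_mul _)))).add
      ((hasValueAt_C w α).mul (hasValueAt_div _ hj₂w)).hasSimplePoleAt).isRegularAt ?_
    rw [hΛw, hm]
    simp only [derivative_sub, eval_sub, hj₁w.eq_zero, hdj₁w.eq_zero]
    field_simp
    linear_combination (α * eval w (derivative j₂) * eval w j₂) * hγ

theorem pullbackCoeff₁_one_sub :
    pullbackCoeff₁ (j₂ - j₁) j₂ Λ α β (α + β + 1 - γ) = pullbackCoeff₁ j₁ j₂ Λ α β γ := by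
  rw [pullbackCoeff₁, pullbackCoeff₁, show j₂ - j₁ - j₂ = -j₁ by ring, ← neg_sub j₁ j₂]
  simp only [logDeriv_neg, map_sub, map_add, map_one, map_neg]
  ring

theorem pullbackCoeff₂_one_sub :
    pullbackCoeff₂ (j₂ - j₁) j₂ Λ α β (α + β + 1 - γ) = pullbackCoeff₂ j₁ j₂ Λ α β γ := by
  rw [pullbackCoeff₂, pullbackCoeff₂, show j₂ - j₁ - j₂ = -j₁ by ring, ← neg_sub j₁ j₂]
  simp only [logDeriv_neg, map_sub, map_add, map_one]
  ring

theorem isRegularAt_pullbackCoeffs_over_one [DecidableEq K]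
    (hcop : IsCoprime j₁ j₂)
    (hΛ : Λ = ∏ t ∈ (j₁ * j₂ * (j₁ - j₂)).roots.toFinset, (X - C t)) {b : ℕ} (hb : 2 ≤ b)
    (hm : (j₁ - j₂).rootMultiplicity w = b) (hγ : (b : K) * (γ - α - β) = 1) :
    IsRegularAt w (pullbackCoeff₁ j₁ j₂ Λ α β γ)
      ∧ IsRegularAt w (pullbackCoeff₂ j₁ j₂ Λ α β γ) := by
  rw [← pullbackCoeff₁_one_sub, ← pullbackCoeff₂_one_sub]
  refine isRegularAt_pullbackCoeffs_over_zero ?_ ?_ hb ?_ ?_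
  · simpa [neg_sub] using (IsCoprime.sub_mul_left_left_iff (z := 1)).mpr hcop |>.neg_left
  · rw [hΛ, show (j₂ - j₁) * j₂ * (j₂ - j₁ - j₂) = j₁ * j₂ * (j₁ - j₂) by ring]
  · rw [← neg_sub, rootMultiplicity_neg_s7, hm]
  · linear_combination hγ

theorem pullbackCoeff₂_eq_over_infty {g μ : K[X]} {k : ℕ} (hg : g ≠ 0) (hμ : μ ≠ 0)
    (hj₂ : j₂ = (X - C w) ^ (k + 2) * g) (hΛ : Λ = (X - C w) * μ) :
    pullbackCoeff₂ j₁ j₂ Λ α β γ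
      = RatFunc.C α * (g.logDeriv + RatFunc.C ((k : K) + 2) * μ.logDeriv
          + RatFunc.C (((k : K) + 2) * (γ - β - 1)) * j₁.logDeriv
          - RatFunc.C (((k : K) + 2) * (γ - α)) * (j₁ - j₂).logDeriv) / (RatFunc.X - RatFunc.C w)
        + (RatFunc.C (α * β) * j₁.logDeriv * (j₁ - j₂).logDeriv
          - RatFunc.C α * g.logDeriv * (g.logDeriv - μ.logDeriv
              - RatFunc.C (γ - β - 1) * j₁.logDeriv + RatFunc.C (γ - α) * (j₁ - j₂).logDeriv)
          + RatFunc.C α * (algebraMap K[X] (RatFunc K) (derivative (derivative g))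
              / algebraMap K[X] (RatFunc K) g)) := by
  have hX := RatFunc.X_sub_C_ne_zero w
  have hL₂ : j₂.logDeriv = ((k : RatFunc K) + 2) / (RatFunc.X - RatFunc.C w) + g.logDeriv := by
    rw [hj₂, logDeriv_mul (pow_ne_zero _ (X_sub_C_ne_zero w)) hg, logDeriv_X_sub_C_pow]
    push_cast
    ring
  have hLΛ : Λ.logDeriv = 1 / (RatFunc.X - RatFunc.C w) + μ.logDeriv := by
    rw [hΛ, logDeriv_mul (X_sub_C_ne_zero w) hμ, ← pow_one (X - C w), logDeriv_X_sub_C_pow,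
      Nat.cast_one]
  have hD₂ := algebraMap_derivative_derivative_div_X_sub_C_pow_mul hg w k
  rw [← hj₂] at hD₂
  rw [pullbackCoeff₂, hL₂, hLΛ, hD₂]
  simp only [map_mul, map_add, map_sub, map_natCast, map_ofNat, map_one]
  field_simp
  ring

theorem isRegularAt_pullbackCoeff₂_over_infty [CharZero K] {g μ : K[X]} {k : ℕ}
    (hj₂ : j₂ = (X - C w) ^ (k + 2) * g) (hΛ : Λ = (X - C w) * μ)
    (hassoc : Associated ((derivative j₁ * j₂ - j₁ * derivative j₂) * Λ) (j₁ * j₂ * (j₁ - j₂)))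
    (hj₁ : j₁.eval w ≠ 0) (hg : g.eval w ≠ 0) (hμ : μ.eval w ≠ 0)
    (hβα : ((k : K) + 2) * (β - α) = 1) :
    IsRegularAt w (pullbackCoeff₂ j₁ j₂ Λ α β γ) := by
  have hj₂w : j₂.eval w = 0 ∧ (derivative j₂).eval w = 0 := by
    simp [hj₂, derivative_X_sub_C_pow]
  have h₃ : (j₁ - j₂).eval w ≠ 0 := by simpa [hj₂w.1] using hj₁
  have hL₁ := hasValueAt_logDeriv hj₁
  have hL₃ := hasValueAt_logDeriv h₃
  have hLg := hasValueAt_logDeriv hg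
  have hLμ := hasValueAt_logDeriv hμ
  have hkey := eval_logDeriv_radical_cofactor hj₂ hΛ hassoc hj₁ hg hμ
  rw [pullbackCoeff₂_eq_over_infty (fun h => hg (by simp [h]))
    (fun h => hμ (by simp [h])) hj₂ hΛ]
  have hF := (hasValueAt_C w α).mul (((hLg.add ((hasValueAt_C w ((k : K) + 2)).mul hLμ)).add
    ((hasValueAt_C w (((k : K) + 2) * (γ - β - 1))).mul hL₁)).sub
    ((hasValueAt_C w (((k : K) + 2) * (γ - α))).mul hL₃))
  have hR := ((((hasValueAt_C w (α * β)).mul hL₁).mul hL₃).sub (((hasValueAt_C w α).mul hLg).mul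
    (((hLg.sub hLμ).sub ((hasValueAt_C w (γ - β - 1)).mul hL₁)).add
      ((hasValueAt_C w (γ - α)).mul hL₃)))).add
    ((hasValueAt_C w α).mul (hasValueAt_div (derivative (derivative g)) hg))
  refine (hF.hasSimplePoleAt_div_X_sub_C.add hR.hasSimplePoleAt).isRegularAt ?_
  simp only [derivative_sub, eval_sub, hj₂w.1, hj₂w.2, sub_zero, add_zero]
  rw [hkey]
  linear_combination (-α * ((derivative j₁).eval w / j₁.eval w)) * hβα

theorem isRegularAt_pullbackCoeffs_over_infty [CharZero K] [IsAlgClosed K]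
    [DecidableEq K] (hcop : IsCoprime j₁ j₂)
    (hunram : ∀ z : K, (derivative j₁ * j₂ - j₁ * derivative j₂).IsRoot z →
      (j₁ * j₂ * (j₁ - j₂)).IsRoot z)
    (hΛ : Λ = ∏ t ∈ (j₁ * j₂ * (j₁ - j₂)).roots.toFinset, (X - C t)) {c : ℕ} (hc : 2 ≤ c)
    (hm : j₂.rootMultiplicity w = c) (hβα : (c : K) * (β - α) = 1) :
    IsRegularAt w (pullbackCoeff₁ j₁ j₂ Λ α β γ)
      ∧ IsRegularAt w (pullbackCoeff₂ j₁ j₂ Λ α β γ) := by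
  have h₂ : j₂ ≠ 0 := by rintro rfl; simp at hm; omega
  have hj₂w : j₂.IsRoot w := (rootMultiplicity_pos h₂).mp (by omega)
  have hj₁w : j₁.eval w ≠ 0 := (hcop.eval_ne_zero_or w).resolve_right (not_not.mpr hj₂w)
  have h₃w : (j₁ - j₂).eval w ≠ 0 := by simpa [hj₂w.eq_zero] using hj₁w
  have h₁ : j₁ ≠ 0 := by rintro rfl; simp at hj₁w
  have h₃ : j₁ - j₂ ≠ 0 := by rintro h; simp [h] at h₃w
  have hP : j₁ * j₂ * (j₁ - j₂) ≠ 0 := mul_ne_zero (mul_ne_zero h₁ h₂) h₃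
  have hΛw : Λ.rootMultiplicity w = 1 := by
    rw [hΛ, rootMultiplicity_prod_roots_toFinset_X_sub_C, if_pos ⟨by simp [hj₂w.eq_zero], hP⟩]
  have hΛ0 : Λ ≠ 0 := by rintro rfl; simp at hΛw
  refine ⟨(hasSimplePoleAt_pullbackCoeff₁ hΛ0 h₁ h₂ h₃).isRegularAt ?_, ?_⟩
  · rw [hΛw, hm, rootMultiplicity_eq_zero hj₁w, rootMultiplicity_eq_zero h₃w]
    push_cast
    linear_combination -hβα
  have hW : derivative j₁ * j₂ - j₁ * derivative j₂ ≠ 0 := by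
    intro hW
    have := rootMultiplicity_wronskian_add_one_s7 h₂ hj₂w hj₁w
    rw [show derivative j₂ * j₁ - j₂ * derivative j₁ = -(derivative j₁ * j₂ - j₁ * derivative j₂)
      by ring, hW, neg_zero, rootMultiplicity_zero, hm] at this
    omega
  obtain ⟨k, rfl⟩ : ∃ k, c = k + 2 := ⟨c - 2, by omega⟩
  obtain ⟨g, hj₂, hg⟩ := exists_eq_pow_rootMultiplicity_mul_and_not_dvd j₂ h₂ w
  obtain ⟨μ, hΛμ, hμ⟩ := exists_eq_pow_rootMultiplicity_mul_and_not_dvd Λ hΛ0 w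
  rw [hm] at hj₂
  rw [hΛw, pow_one] at hΛμ
  exact isRegularAt_pullbackCoeff₂_over_infty hj₂ hΛμ
    (hΛ ▸ associated_wronskian_mul_prod_roots hcop hP hW hunram) hj₁w
    (fun h => hg (dvd_iff_isRoot.mpr h)) (fun h => hμ (dvd_iff_isRoot.mpr h))
    (by exact_mod_cast hβα)

end Pullback

theorem belyi_pullback_no_apparent_singularity_general
    (j₁ j₂ : Polynomial ℂ)
    (hcop : IsCoprime j₁ j₂)
    (hunram : ∀ z : ℂ, (derivative j₁ * j₂ - j₁ * derivative j₂).IsRoot z →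
      (j₁ * j₂ * (j₁ - j₂)).IsRoot z)
    (Λ : Polynomial ℂ)
    (hΛ : Λ = ∏ t ∈ (j₁ * j₂ * (j₁ - j₂)).roots.toFinset, (X - C t))
    (α β γ : ℂ)
    (P : Polynomial ℂ →+* RatFunc ℂ) (hP : P = algebraMap (Polynomial ℂ) (RatFunc ℂ))
    (q₁ q₂ : RatFunc ℂ)
    (hq₁ : q₁ = P (derivative Λ) / P Λ
        + RatFunc.C (γ - 1) * (P (derivative j₁) / P j₁)
        + RatFunc.C (-γ + α + β) * (P (derivative (j₁ - j₂)) / P (j₁ - j₂))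
        + RatFunc.C (α - β) * (P (derivative j₂) / P j₂))
    (hq₂ : q₂ = RatFunc.C (α * β) * (P (derivative j₁) / P j₁)
          * (P (derivative (j₁ - j₂)) / P (j₁ - j₂))
        - RatFunc.C α * (P (derivative j₂) / P j₂)
          * (P (derivative j₂) / P j₂ - P (derivative Λ) / P Λ
              - RatFunc.C (γ - β - 1) * (P (derivative j₁) / P j₁)
              + RatFunc.C (γ - α) * (P (derivative (j₁ - j₂)) / P (j₁ - j₂)))
        + RatFunc.C α * (P (derivative (derivative j₂)) / P j₂))
    (w : ℂ)
    (hyp : (∃ a : ℕ, 2 ≤ a ∧ j₁.rootMultiplicity w = a ∧ (a : ℂ) * (1 - γ) = 1)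
      ∨ (∃ b : ℕ, 2 ≤ b ∧ (j₁ - j₂).rootMultiplicity w = b ∧ (b : ℂ) * (γ - α - β) = 1)
      ∨ (∃ c : ℕ, 2 ≤ c ∧ j₂.rootMultiplicity w = c ∧ (c : ℂ) * (β - α) = 1)) :
    q₁.denom.eval w ≠ 0 ∧ q₂.denom.eval w ≠ 0 := by
  subst hP hq₁ hq₂
  rcases hyp with ⟨a, ha, hm, hγ⟩ | ⟨b, hb, hm, hγ⟩ | ⟨c, hc, hm, hβα⟩
  · exact isRegularAt_pullbackCoeffs_over_zero hcop hΛ ha hm hγ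
  · exact isRegularAt_pullbackCoeffs_over_one hcop hΛ hb hm hγ
  · exact isRegularAt_pullbackCoeffs_over_infty hcop hunram hΛ hc hm hβα

/-- Corollary 1 (absence of apparent singularities): with `q₁, q₂ ∈ ℂ(z)` the
coefficients of the equation satisfied by `j₂^{−α}·₂F₁(α,β,γ; j)`, if `w` is a
root of `j₁` of multiplicity `a ≥ 2` with `a(1−γ) = 1`, or a root of `j₁ − j₂`
of multiplicity `b ≥ 2` with `b(γ−α−β) = 1`, or a root of `j₂` of multiplicity
`c ≥ 2` with `c(β−α) = 1`, then neither `q₁` nor `q₂` has a pole at `w`. -/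
theorem belyi_pullback_no_apparent_singularity
    (j₁ j₂ : Polynomial ℂ)
    (hcop : IsCoprime j₁ j₂)
    (hdeg : j₂.degree < j₁.degree)
    (hN : 1 ≤ j₁.natDegree)
    (hunram : ∀ z : ℂ, (derivative j₁ * j₂ - j₁ * derivative j₂).IsRoot z →
      (j₁ * j₂ * (j₁ - j₂)).IsRoot z)
    (Λ : Polynomial ℂ)
    (hΛ : Λ = ∏ t ∈ (j₁ * j₂ * (j₁ - j₂)).roots.toFinset, (X - C t))
    (α β γ : ℂ)
    (P : Polynomial ℂ →+* RatFunc ℂ) (hP : P = algebraMap (Polynomial ℂ) (RatFunc ℂ))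
    (q₁ q₂ : RatFunc ℂ)
    (hq₁ : q₁ = P (derivative Λ) / P Λ
        + RatFunc.C (γ - 1) * (P (derivative j₁) / P j₁)
        + RatFunc.C (-γ + α + β) * (P (derivative (j₁ - j₂)) / P (j₁ - j₂))
        + RatFunc.C (α - β) * (P (derivative j₂) / P j₂))
    (hq₂ : q₂ = RatFunc.C (α * β) * (P (derivative j₁) / P j₁)
          * (P (derivative (j₁ - j₂)) / P (j₁ - j₂))
        - RatFunc.C α * (P (derivative j₂) / P j₂)
          * (P (derivative j₂) / P j₂ - P (derivative Λ) / P Λ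
              - RatFunc.C (γ - β - 1) * (P (derivative j₁) / P j₁)
              + RatFunc.C (γ - α) * (P (derivative (j₁ - j₂)) / P (j₁ - j₂)))
        + RatFunc.C α * (P (derivative (derivative j₂)) / P j₂))
    (w : ℂ)
    (hyp : (∃ a : ℕ, 2 ≤ a ∧ j₁.rootMultiplicity w = a ∧ (a : ℂ) * (1 - γ) = 1)
      ∨ (∃ b : ℕ, 2 ≤ b ∧ (j₁ - j₂).rootMultiplicity w = b ∧ (b : ℂ) * (γ - α - β) = 1)
      ∨ (∃ c : ℕ, 2 ≤ c ∧ j₂.rootMultiplicity w = c ∧ (c : ℂ) * (β - α) = 1)) :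
    q₁.denom.eval w ≠ 0 ∧ q₂.denom.eval w ≠ 0 :=
  belyi_pullback_no_apparent_singularity_general j₁ j₂ hcop hunram Λ hΛ α β γ P hP q₁ q₂ hq₁ hq₂ w
    hyp
end

section
/- Let α, β, γ ∈ ℂ, let U ⊆ ℂ be open with z·(z−1)·(z+1) ≠ 0 and z² ∉ {0,1} for all z ∈ U, let V ⊆ ℂ \ {0,1} be open containing {z² : z ∈ U}, and let Y be a solution of the hypergeometric equation with parameters α, β, γ on V. Then the function y(z) := Y(z²) satisfies, for all z ∈ U, y″(z) + ((2γ−1)/z + (α+β+1−γ)/(z−1) + (α+β+1−γ)/(z+1))·y′(z) + (4αβ/((z−1)(z+1)))·y(z) = 0. -/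
/-!
Writing `w = z²`, the chain rule gives `y' = 2z·Y'(w)` and `y'' = 4z²·Y''(w) + 2·Y'(w)`.
Substituting these, the left-hand side of the pulled-back equation is exactly `4z²` times the
left-hand side of the hypergeometric equation at `w`, so it vanishes wherever the latter does.
-/

section Calculus

variable {𝕜 : Type*} [NontriviallyNormedField 𝕜]

theorem hasDerivAt_comp_sq {f : 𝕜 → 𝕜} {z : 𝕜} (hf : DifferentiableAt 𝕜 f (z ^ 2)) :
    HasDerivAt (fun x => f (x ^ 2)) (deriv f (z ^ 2) * (2 * z)) z := by
  have hsq : HasDerivAt (fun x : 𝕜 => x ^ 2) (2 * z) z := by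
    simpa using hasDerivAt_pow 2 z
  exact hf.hasDerivAt.comp z hsq

theorem deriv_deriv_comp_sq {f : 𝕜 → 𝕜} {U : Set 𝕜} (hU : IsOpen U)
    (hf : ∀ x ∈ U, DifferentiableAt 𝕜 f (x ^ 2)) {z : 𝕜} (hz : z ∈ U)
    (hf' : DifferentiableAt 𝕜 (deriv f) (z ^ 2)) :
    deriv (deriv fun x => f (x ^ 2)) z
      = deriv (deriv f) (z ^ 2) * (2 * z) * (2 * z) + deriv f (z ^ 2) * 2 := by
  have hfirst : deriv (fun x => f (x ^ 2)) =ᶠ[nhds z] fun x => deriv f (x ^ 2) * (2 * x) := by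
    filter_upwards [hU.mem_nhds hz] with x hx using (hasDerivAt_comp_sq (hf x hx)).deriv
  rw [hfirst.deriv_eq]
  exact ((hasDerivAt_comp_sq hf').mul ((hasDerivAt_id z).const_mul 2)).deriv.trans (by simp)

end Calculus

theorem quadratic_pullback_expr_eq_four_mul_sq {K : Type*} [Field K] (α β γ A B C z : K)
    (hz : z ≠ 0) (hzm : z - 1 ≠ 0) (hzp : z + 1 ≠ 0) :
    A * (2 * z) * (2 * z) + B * 2
        + ((2 * γ - 1) / z + (α + β + 1 - γ) / (z - 1) + (α + β + 1 - γ) / (z + 1)) * (B * (2 * z))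
        + (4 * α * β / ((z - 1) * (z + 1))) * C
      = 4 * z ^ 2 * (A + ((γ - (α + β + 1) * z ^ 2) / (z ^ 2 * (1 - z ^ 2))) * B
        + (α * β / (z ^ 2 * (z ^ 2 - 1))) * C) := by
  have hw : 1 - z ^ 2 ≠ 0 := by
    rw [show 1 - z ^ 2 = -((z - 1) * (z + 1)) by ring]
    exact neg_ne_zero.mpr (mul_ne_zero hzm hzp)
  have hw' : z ^ 2 - 1 ≠ 0 := by
    rw [show z ^ 2 - 1 = (z - 1) * (z + 1) by ring]
    exact mul_ne_zero hzm hzp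
  field_simp
  ring

theorem quadratic_pullback_heun_general
    (α β γ : ℂ)
    (U V : Set ℂ) (hU : IsOpen U)
    (hUreg : ∀ z ∈ U, z * (z - 1) * (z + 1) ≠ 0 ∧ z ^ 2 ≠ 0 ∧ z ^ 2 ≠ 1)
    (hjUV : ∀ z ∈ U, z ^ 2 ∈ V)
    (Y : ℂ → ℂ)
    (hY₁ : ∀ w ∈ V, DifferentiableAt ℂ Y w)
    (hY₂ : ∀ w ∈ V, DifferentiableAt ℂ (deriv Y) w)
    (hYhyp : ∀ w ∈ V,
      deriv (deriv Y) w + ((γ - (α + β + 1) * w) / (w * (1 - w))) * deriv Y w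
        + (α * β / (w * (w - 1))) * Y w = 0)
    (y : ℂ → ℂ) (hy : y = fun z => Y (z ^ 2)) :
    ∀ z ∈ U,
      deriv (deriv y) z
        + ((2 * γ - 1) / z + (α + β + 1 - γ) / (z - 1) + (α + β + 1 - γ) / (z + 1))
            * deriv y z
        + (4 * α * β / ((z - 1) * (z + 1))) * y z = 0 := by
  intro z hz
  subst hy
  have hw := hjUV z hz
  obtain ⟨⟨hz₀, hzm⟩, hzp⟩ : (z ≠ 0 ∧ z - 1 ≠ 0) ∧ z + 1 ≠ 0 := by
    simpa only [mul_ne_zero_iff] using (hUreg z hz).1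
  rw [deriv_deriv_comp_sq hU (fun x hx => hY₁ _ (hjUV x hx)) hz (hY₂ _ hw),
    (hasDerivAt_comp_sq (hY₁ _ hw)).deriv,
    quadratic_pullback_expr_eq_four_mul_sq α β γ _ _ _ z hz₀ hzm hzp, hYhyp _ hw, mul_zero]

/-- Row 32 of Table 1b: the quadratic pull-back `j(z) = z²` of the hypergeometric
equation with parameters `α, β, γ` satisfies
`y″ + ((2γ−1)/z + (α+β+1−γ)/(z−1) + (α+β+1−γ)/(z+1))·y′
  + (4αβ/((z−1)(z+1)))·y = 0`. -/
theorem quadratic_pullback_heun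
    (α β γ : ℂ)
    (U V : Set ℂ) (hU : IsOpen U) (hV : IsOpen V)
    (hUreg : ∀ z ∈ U, z * (z - 1) * (z + 1) ≠ 0 ∧ z ^ 2 ≠ 0 ∧ z ^ 2 ≠ 1)
    (hV01 : ∀ w ∈ V, w ≠ 0 ∧ w ≠ 1)
    (hjUV : ∀ z ∈ U, z ^ 2 ∈ V)
    (Y : ℂ → ℂ)
    (hY₁ : ∀ w ∈ V, DifferentiableAt ℂ Y w)
    (hY₂ : ∀ w ∈ V, DifferentiableAt ℂ (deriv Y) w)
    (hYhyp : ∀ w ∈ V,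
      deriv (deriv Y) w + ((γ - (α + β + 1) * w) / (w * (1 - w))) * deriv Y w
        + (α * β / (w * (w - 1))) * Y w = 0)
    (y : ℂ → ℂ) (hy : y = fun z => Y (z ^ 2)) :
    ∀ z ∈ U,
      deriv (deriv y) z
        + ((2 * γ - 1) / z + (α + β + 1 - γ) / (z - 1) + (α + β + 1 - γ) / (z + 1))
            * deriv y z
        + (4 * α * β / ((z - 1) * (z + 1))) * y z = 0 :=
  quadratic_pullback_heun_general α β γ U V hU hUreg hjUV Y hY₁ hY₂ hYhyp y hy
end

section
/- Let α, β, γ ∈ ℂ with γ − α − β = 1/2, set j(z) = (1/4)·z²(z+3). Let U ⊆ ℂ be open with z·(z+3)·(z−1)·(z+2) ≠ 0 for all z ∈ U, let V ⊆ ℂ \ {0,1} be open with j(U) ⊆ V, and let Y be a solution of the hypergeometric equation with parameters α, β, γ on V. Then the function y(z) := Y(j(z)) satisfies, for all z ∈ U, y″(z) + ((2γ−1)/z + γ/(z+3) + (1/2)/(z−1))·y′(z) + (9αβ/((z+3)(z−1)))·y(z) = 0; in particular, z = −2 (the double root of j − 1) is not a singularity of the resulting equation. -/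
/-!
By the chain rule, `y = Y ∘ j` satisfies the hypergeometric equation `Y'' + p Y' + q Y = 0`
pulled back along `j`, whose coefficients are `p (j z) j' − j'' / j'` and `q (j z) j'²`
wherever `j' ≠ 0`. For `j z = z²(z+3)/4` we have `j' = 3z(z+2)/4`, `j'' = 3(z+1)/2` and
`j (1 − j) = −z²(z+3)(z−1)(z+2)²/16`: the factor `(z+2)²` of `j − 1` cancels against `j'²`,
and with `γ = α + β + 1/2` the two coefficients become those of the Heun equation.
-/

open Filter Topology

section Pullback

variable {𝕜 : Type*} [NontriviallyNormedField 𝕜]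

theorem deriv_deriv_comp_of_eventually {Y j : 𝕜 → 𝕜} {z : 𝕜}
    (hY : ∀ᶠ x in 𝓝 z, DifferentiableAt 𝕜 Y (j x))
    (hj : ∀ᶠ x in 𝓝 z, DifferentiableAt 𝕜 j x)
    (hY' : DifferentiableAt 𝕜 (deriv Y) (j z)) (hj' : DifferentiableAt 𝕜 (deriv j) z) :
    deriv (deriv fun x => Y (j x)) z
      = deriv (deriv Y) (j z) * deriv j z ^ 2 + deriv Y (j z) * deriv (deriv j) z := by
  have hchain : deriv (fun x => Y (j x)) =ᶠ[𝓝 z] fun x => deriv Y (j x) * deriv j x := by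
    filter_upwards [hY, hj] with x hYx hjx using deriv_comp x hYx hjx
  have hprod : HasDerivAt (fun x => deriv Y (j x) * deriv j x)
      (deriv (deriv Y) (j z) * deriv j z * deriv j z + deriv Y (j z) * deriv (deriv j) z) z :=
    (hY'.hasDerivAt.comp z hj.self_of_nhds.hasDerivAt).mul hj'.hasDerivAt
  rw [hchain.deriv_eq, hprod.deriv]
  ring

theorem pullback_second_order_ode {Y j p q : 𝕜 → 𝕜} {z : 𝕜}
    (hY : ∀ᶠ x in 𝓝 z, DifferentiableAt 𝕜 Y (j x))
    (hj : ∀ᶠ x in 𝓝 z, DifferentiableAt 𝕜 j x)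
    (hY' : DifferentiableAt 𝕜 (deriv Y) (j z)) (hj' : DifferentiableAt 𝕜 (deriv j) z)
    (hj₀ : deriv j z ≠ 0)
    (hode : deriv (deriv Y) (j z) + p (j z) * deriv Y (j z) + q (j z) * Y (j z) = 0) :
    deriv (deriv fun x => Y (j x)) z
      + (p (j z) * deriv j z - deriv (deriv j) z / deriv j z) * deriv (fun x => Y (j x)) z
      + q (j z) * deriv j z ^ 2 * Y (j z) = 0 := by
  have hcomp : HasDerivAt (fun x => Y (j x)) (deriv Y (j z) * deriv j z) z :=
    hY.self_of_nhds.hasDerivAt.comp z hj.self_of_nhds.hasDerivAt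
  rw [deriv_deriv_comp_of_eventually hY hj hY' hj', hcomp.deriv]
  field_simp
  linear_combination deriv j z ^ 2 * hode

variable [CharZero 𝕜]

theorem deriv_cubic_cover :
    deriv (fun z : 𝕜 => 1 / 4 * z ^ 2 * (z + 3)) = fun z => 3 / 4 * z * (z + 2) := by
  funext z
  have h : HasDerivAt (fun z : 𝕜 => 1 / 4 * z ^ 2 * (z + 3)) _ z :=
    ((hasDerivAt_pow 2 z).const_mul (1 / 4 : 𝕜)).mul ((hasDerivAt_id z).add_const 3)
  rw [h.deriv]
  simp only [one_div, Nat.cast_ofNat, Nat.add_one_sub_one, pow_one, mul_one]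
  ring

theorem deriv_deriv_cubic_cover (z : 𝕜) :
    deriv (fun z : 𝕜 => 3 / 4 * z * (z + 2)) z = 3 / 2 * (z + 1) := by
  have h : HasDerivAt (fun z : 𝕜 => 3 / 4 * z * (z + 2)) _ z :=
    ((hasDerivAt_id z).const_mul (3 / 4 : 𝕜)).mul ((hasDerivAt_id z).add_const 2)
  rw [h.deriv]
  simp only [mul_one, id_eq]
  ring

end Pullback

theorem ne_zero_of_mul_mul_mul_ne_zero {M₀ : Type*} [MulZeroClass M₀] {a b c d : M₀}
    (h : a * b * c * d ≠ 0) : a ≠ 0 ∧ b ≠ 0 ∧ c ≠ 0 ∧ d ≠ 0 :=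
  ⟨left_ne_zero_of_mul (left_ne_zero_of_mul (left_ne_zero_of_mul h)),
    right_ne_zero_of_mul (left_ne_zero_of_mul (left_ne_zero_of_mul h)),
    right_ne_zero_of_mul (left_ne_zero_of_mul h), right_ne_zero_of_mul h⟩

section CubicCover

variable {K : Type*} [Field K] [CharZero K]

theorem cubic_cover_coeff_first (α β γ z : K) (hγ : γ - α - β = 1 / 2)
    (hz : z * (z + 3) * (z - 1) * (z + 2) ≠ 0) :
    (γ - (α + β + 1) * (1 / 4 * z ^ 2 * (z + 3)))
          / (1 / 4 * z ^ 2 * (z + 3) * (1 - 1 / 4 * z ^ 2 * (z + 3))) * (3 / 4 * z * (z + 2))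
        - 3 / 2 * (z + 1) / (3 / 4 * z * (z + 2))
      = (2 * γ - 1) / z + γ / (z + 3) + (1 / 2) / (z - 1) := by
  obtain ⟨h0, h3, h1, h2⟩ := ne_zero_of_mul_mul_mul_ne_zero hz
  rw [show 1 / 4 * z ^ 2 * (z + 3) * (1 - 1 / 4 * z ^ 2 * (z + 3))
      = -(z ^ 2 * (z + 3) * (z - 1) * (z + 2) ^ 2) / 16 by ring,
    show γ = α + β + 1 / 2 by linear_combination hγ]
  field_simp
  ring

theorem cubic_cover_coeff_zeroth (α β z : K) (hz : z * (z + 3) * (z - 1) * (z + 2) ≠ 0) :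
    α * β / (1 / 4 * z ^ 2 * (z + 3) * (1 / 4 * z ^ 2 * (z + 3) - 1)) * (3 / 4 * z * (z + 2)) ^ 2
      = 9 * α * β / ((z + 3) * (z - 1)) := by
  obtain ⟨h0, h3, h1, h2⟩ := ne_zero_of_mul_mul_mul_ne_zero hz
  rw [show 1 / 4 * z ^ 2 * (z + 3) * (1 / 4 * z ^ 2 * (z + 3) - 1)
      = z ^ 2 * (z + 3) * (z - 1) * (z + 2) ^ 2 / 16 by ring]
  field_simp
  ring

end CubicCover

theorem pullback_z2_zplus3_heun_general
    (α β γ : ℂ) (hγ : γ - α - β = 1 / 2)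
    (j : ℂ → ℂ) (hj : j = fun z => (1 / 4) * z ^ 2 * (z + 3))
    (U V : Set ℂ) (hU : IsOpen U)
    (hUreg : ∀ z ∈ U, z * (z + 3) * (z - 1) * (z + 2) ≠ 0)
    (hjUV : ∀ z ∈ U, j z ∈ V)
    (Y : ℂ → ℂ)
    (hY₁ : ∀ w ∈ V, DifferentiableAt ℂ Y w)
    (hY₂ : ∀ w ∈ V, DifferentiableAt ℂ (deriv Y) w)
    (hYhyp : ∀ w ∈ V,
      deriv (deriv Y) w + ((γ - (α + β + 1) * w) / (w * (1 - w))) * deriv Y w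
        + (α * β / (w * (w - 1))) * Y w = 0)
    (y : ℂ → ℂ) (hy : y = fun z => Y (j z)) :
    ∀ z ∈ U,
      deriv (deriv y) z
        + ((2 * γ - 1) / z + γ / (z + 3) + (1 / 2) / (z - 1)) * deriv y z
        + (9 * α * β / ((z + 3) * (z - 1))) * y z = 0 := by
  intro z hz
  subst hj hy
  obtain ⟨h0, -, -, h2⟩ := ne_zero_of_mul_mul_mul_ne_zero (hUreg z hz)
  have hpull := pullback_second_order_ode (Y := Y)
    (p := fun w => (γ - (α + β + 1) * w) / (w * (1 - w))) (q := fun w => α * β / (w * (w - 1)))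
    (hU.eventually_mem hz |>.mono fun x hx => hY₁ _ (hjUV x hx))
    (.of_forall fun x => by fun_prop) (hY₂ _ (hjUV z hz)) (by rw [deriv_cubic_cover]; fun_prop)
    (by rw [deriv_cubic_cover]; simp [h0, h2]) (hYhyp _ (hjUV z hz))
  rwa [deriv_cubic_cover, deriv_deriv_cubic_cover, cubic_cover_coeff_first α β γ z hγ (hUreg z hz),
    cubic_cover_coeff_zeroth α β z (hUreg z hz)] at hpull

/-- Row 34 of Table 1b: the pull-back by `j(z) = z²(z+3)/4` (ramification data
`(2)(1),(2)(1),(3)`) of the hypergeometric equation with parameters `α, β, γ`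
satisfying `γ − α − β = 1/2` gives the Heun equation
`y″ + ((2γ−1)/z + γ/(z+3) + (1/2)/(z−1))·y′ + (9αβ/((z+3)(z−1)))·y = 0`;
in particular the double root `z = −2` of `j − 1` is not a singularity. -/
theorem pullback_z2_zplus3_heun
    (α β γ : ℂ) (hγ : γ - α - β = 1 / 2)
    (j : ℂ → ℂ) (hj : j = fun z => (1 / 4) * z ^ 2 * (z + 3))
    (U V : Set ℂ) (hU : IsOpen U) (hV : IsOpen V)
    (hUreg : ∀ z ∈ U, z * (z + 3) * (z - 1) * (z + 2) ≠ 0)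
    (hV01 : ∀ w ∈ V, w ≠ 0 ∧ w ≠ 1)
    (hjUV : ∀ z ∈ U, j z ∈ V)
    (Y : ℂ → ℂ)
    (hY₁ : ∀ w ∈ V, DifferentiableAt ℂ Y w)
    (hY₂ : ∀ w ∈ V, DifferentiableAt ℂ (deriv Y) w)
    (hYhyp : ∀ w ∈ V,
      deriv (deriv Y) w + ((γ - (α + β + 1) * w) / (w * (1 - w))) * deriv Y w
        + (α * β / (w * (w - 1))) * Y w = 0)
    (y : ℂ → ℂ) (hy : y = fun z => Y (j z)) :
    ∀ z ∈ U,
      deriv (deriv y) z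
        + ((2 * γ - 1) / z + γ / (z + 3) + (1 / 2) / (z - 1)) * deriv y z
        + (9 * α * β / ((z + 3) * (z - 1))) * y z = 0 :=
  pullback_z2_zplus3_heun_general α β γ hγ j hj U V hU hUreg hjUV Y hY₁ hY₂ hYhyp y hy
end
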